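/- Let ρ_0 ∈ P_p(ℝ^d) and let ν be a minimizer of E(ν) = W_p^p(ρ_0, ν) + Λ·L(ν). Then supp ν is contained in the closed convex hull of supp ρ_0. -/

import Mathlib

open MeasureTheory Metric Filter Set
open scoped ENNReal NNReal Topology

noncomputable section

/-- The support of a measure: points all of whose neighborhoods have positive mass. -/
def msupport {E : Type*} [MetricSpace E] [MeasurableSpace E] (ν : Measure E) : Set E :=
  {x | ∀ r > 0, 0 < ν (ball x r)}

open Classical in
/-- The length functional: `min {α ≥ 0 | α • ν ≥ H¹⌊supp ν}` if `supp ν` is connected,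
`+∞` otherwise (with `min ∅ = +∞`). -/
noncomputable def lengthF {E : Type*} [MetricSpace E] [MeasurableSpace E] [BorelSpace E]
    (ν : Measure E) : ℝ≥0∞ :=
  if IsConnected (msupport ν) then
    sInf {α : ℝ≥0∞ | (μH[1] : Measure E).restrict (msupport ν) ≤ α • ν}
  else ⊤

/-- The p-th power of the p-Wasserstein distance, as an infimum over couplings. -/
noncomputable def Wpp {E : Type*} [MetricSpace E] [MeasurableSpace E]
    (p : ℝ) (μ ν : Measure E) : ℝ≥0∞ :=
  ⨅ (γ : Measure (E × E)) (_ : γ.map Prod.fst = μ ∧ γ.map Prod.snd = ν),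
    ∫⁻ z, edist z.1 z.2 ^ p ∂γ

/-- The energy `W_p^p(ρ₀, ν) + Λ L(ν)`. -/
noncomputable def energyF {E : Type*} [MetricSpace E] [MeasurableSpace E] [BorelSpace E]
    (p Λ : ℝ) (ρ₀ ν : Measure E) : ℝ≥0∞ :=
  Wpp p ρ₀ ν + ENNReal.ofReal Λ * lengthF ν

/-- Kuratowski convergence of a sequence of (closed) sets. -/
def KuraTendsto {E : Type*} [MetricSpace E] (C : ℕ → Set E) (L : Set E) : Prop :=
  (∀ u : ℕ → E, (∀ n, u n ∈ C n) → ∀ x : E, MapClusterPt x atTop u → x ∈ L) ∧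
  (∀ x ∈ L, ∃ u : ℕ → E, (∀ n, u n ∈ C n) ∧ Tendsto u atTop (𝓝 x))

set_option linter.unusedSectionVars false
set_option linter.unusedVariables false
set_option maxHeartbeats 1000000

open scoped RealInnerProductSpace

section Auxiliary

theorem isClosed_msupport {E : Type*} [MetricSpace E] [MeasurableSpace E] (ν : Measure E) :
    IsClosed (msupport ν) := by
  rw [← isOpen_compl_iff]; rw [Metric.isOpen_iff]
  intro x hx
  simp only [msupport, mem_compl_iff, mem_setOf_eq, not_forall, not_lt, nonpos_iff_eq_zero] at hx
  obtain ⟨r, hr, hr0⟩ := hx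
  refine ⟨r/2, by positivity, fun y hy => ?_⟩
  simp only [msupport, mem_compl_iff, mem_setOf_eq, not_forall, not_lt, nonpos_iff_eq_zero]
  refine ⟨r/2, by positivity, measure_mono_null (fun z hz => ?_) hr0⟩
  have := dist_triangle z y x
  simp only [mem_ball] at *
  linarith

theorem msupport_compl_null {E : Type*} [MetricSpace E] [MeasurableSpace E] [OpensMeasurableSpace E]
    [SecondCountableTopology E] (ν : Measure E) : ν (msupport ν)ᶜ = 0 := by
  have : ∀ x : ((msupport ν)ᶜ : Set E), ∃ r : ℝ, 0 < r ∧ ν (ball (x : E) r) = 0 := by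
    intro ⟨x, hx⟩
    simp only [msupport, mem_compl_iff, mem_setOf_eq, not_forall, not_lt, nonpos_iff_eq_zero] at hx
    obtain ⟨r, hr, h0⟩ := hx; exact ⟨r, hr, h0⟩
  choose r hr h0 using this
  obtain ⟨T, hTc, hT⟩ := TopologicalSpace.isOpen_iUnion_countable
    (fun x : ((msupport ν)ᶜ : Set E) => ball (x : E) (r x)) (fun x => isOpen_ball)
  have hcov : (msupport ν)ᶜ ⊆ ⋃ i ∈ T, ball (i : E) (r i) := by
    intro x hx
    have : x ∈ ⋃ i : ((msupport ν)ᶜ : Set E), ball (i : E) (r i) :=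
      mem_iUnion.2 ⟨⟨x, hx⟩, mem_ball_self (hr ⟨x, hx⟩)⟩
    rwa [← hT] at this
  exact measure_mono_null hcov ((measure_biUnion_null_iff hTc).2 fun i _ => h0 i)

section Proj
variable {F : Type*} [NormedAddCommGroup F] [InnerProductSpace ℝ F] [CompleteSpace F]
  {K : Set F}

theorem proj_exists (hne : K.Nonempty) (hcl : IsClosed K) (hconv : Convex ℝ K) :
    ∀ u : F, ∃ v, v ∈ K ∧ ∀ w ∈ K, ⟪u - v, w - v⟫ ≤ 0 := by
  intro u
  obtain ⟨v, hvK, hv⟩ := exists_norm_eq_iInf_of_complete_convex hne hcl.isComplete hconv u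
  exact ⟨v, hvK, (norm_eq_iInf_iff_real_inner_le_zero hconv hvK).1 hv⟩

theorem proj_lipschitz {π : F → F} (hπK : ∀ u, π u ∈ K)
    (hobt : ∀ u, ∀ w ∈ K, ⟪u - π u, w - π u⟫ ≤ 0) : LipschitzWith 1 π := by
  refine LipschitzWith.of_dist_le_mul fun u v => ?_
  rw [NNReal.coe_one, one_mul, dist_eq_norm, dist_eq_norm]
  have h1 := hobt u (π v) (hπK v)
  have h2 := hobt v (π u) (hπK u)
  have key : ‖π u - π v‖ ^ 2 ≤ ⟪u - v, π u - π v⟫ := by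
    have e1 : ⟪u - π u, π v - π u⟫ ≤ 0 := h1
    have e2 : ⟪v - π v, π u - π v⟫ ≤ 0 := h2
    have : ⟪u - v - (π u - π v), π u - π v⟫ ≥ 0 := by
      have : u - v - (π u - π v) = (u - π u) - (v - π v) := by abel
      rw [this, inner_sub_left]
      have e1' : 0 ≤ ⟪u - π u, π u - π v⟫ := by
        have : π u - π v = -(π v - π u) := by abel
        rw [this, inner_neg_right]; linarith
      linarith
    rw [inner_sub_left, real_inner_self_eq_norm_sq] at this
    linarith
  have hc := real_inner_le_norm (u - v) (π u - π v)
  by_cases h : ‖π u - π v‖ = 0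
  · rw [h]; positivity
  · have hpos : 0 < ‖π u - π v‖ := lt_of_le_of_ne (norm_nonneg _) (Ne.symm h)
    nlinarith

theorem proj_pythag {π : F → F} (hπK : ∀ u, π u ∈ K)
    (hobt : ∀ u, ∀ w ∈ K, ⟪u - π u, w - π u⟫ ≤ 0) {x : F} (hx : x ∈ K) (y : F) :
    dist x (π y) ^ 2 + dist (π y) y ^ 2 ≤ dist x y ^ 2 := by
  have h := hobt y x hx
  have expand : ‖x - y‖ ^ 2 = ‖x - π y‖ ^ 2 + ‖y - π y‖ ^ 2 - 2 * ⟪x - π y, y - π y⟫ := by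
    have : x - y = (x - π y) - (y - π y) := by abel
    rw [this, norm_sub_sq_real]; ring
  have hinner : ⟪x - π y, y - π y⟫ ≤ 0 := by
    rw [real_inner_comm]; exact h
  rw [dist_eq_norm, dist_eq_norm, dist_eq_norm]
  have : ‖π y - y‖ = ‖y - π y‖ := norm_sub_rev _ _
  rw [this]
  linarith

end Proj

theorem hausdorff_ge_dist {X : Type*} [MetricSpace X] [MeasurableSpace X] [BorelSpace X]
    {s : Set X} (hs : IsPreconnected s) {x y : X} (hx : x ∈ s) (hy : y ∈ s) :
    ENNReal.ofReal (dist x y) ≤ μH[1] s := by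
  have hf : LipschitzWith 1 (dist x) := LipschitzWith.dist_right x
  have himg : μH[1] (dist x '' s) ≤ μH[1] s := by
    have := hf.hausdorffMeasure_image_le (zero_le_one) s
    simpa using this
  have hconn : IsPreconnected (dist x '' s) :=
    hs.image _ (hf.continuous.continuousOn)
  have hIcc : Icc (0 : ℝ) (dist x y) ⊆ dist x '' s := by
    apply hconn.Icc_subset ⟨x, hx, dist_self x⟩ ⟨y, hy, rfl⟩
  calc ENNReal.ofReal (dist x y) = volume (Icc (0:ℝ) (dist x y)) := by
        rw [Real.volume_Icc]; simp
    _ = μH[1] (Icc (0:ℝ) (dist x y)) := by rw [MeasureTheory.hausdorffMeasure_real]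
    _ ≤ μH[1] (dist x '' s) := measure_mono hIcc
    _ ≤ μH[1] s := himg

theorem isBounded_of_hausdorff_lt_top {X : Type*} [MetricSpace X] [MeasurableSpace X] [BorelSpace X]
    {s : Set X} (hs : IsPreconnected s) (hfin : μH[1] s ≠ ⊤) : Bornology.IsBounded s := by
  rw [Metric.isBounded_iff]
  refine ⟨(μH[1] s).toReal, fun x hx y hy => ?_⟩
  have := hausdorff_ge_dist hs hx hy
  exact (ENNReal.ofReal_le_iff_le_toReal hfin).1 this


section MapAux
variable {E : Type*} [MetricSpace E] [MeasurableSpace E] [BorelSpace E]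

theorem msupport_map_eq {ν : Measure E} {π : E → E} (hπ : LipschitzWith 1 π)
    (hcpt : IsCompact (msupport ν)) (hnull : ν (msupport ν)ᶜ = 0) :
    msupport (ν.map π) = π '' (msupport ν) := by
  have hπm : Measurable π := hπ.continuous.measurable
  apply Subset.antisymm
  · intro z hz
    by_contra hzn
    have hcl : IsClosed (π '' msupport ν) := (hcpt.image hπ.continuous).isClosed
    obtain ⟨r, hr, hball⟩ : ∃ r > 0, ball z r ∩ π '' msupport ν = ∅ := by
      have : z ∈ (π '' msupport ν)ᶜ := hzn
      obtain ⟨r, hr, hsub⟩ := Metric.isOpen_iff.1 hcl.isOpen_compl z this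
      refine ⟨r, hr, ?_⟩
      rw [eq_empty_iff_forall_notMem]
      exact fun w ⟨hw1, hw2⟩ => (hsub hw1) hw2
    have h0 : (ν.map π) (ball z r) = 0 := by
      rw [Measure.map_apply hπm measurableSet_ball]
      apply measure_mono_null _ hnull
      intro w hw
      simp only [mem_compl_iff]
      intro hwS
      have : π w ∈ ball z r ∩ π '' msupport ν := ⟨hw, ⟨w, hwS, rfl⟩⟩
      rw [hball] at this; exact this
    have := hz r hr
    rw [h0] at this; exact lt_irrefl 0 this
  · rintro z ⟨s, hs, rfl⟩
    intro r hr
    rw [Measure.map_apply hπm measurableSet_ball]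
    have hsub : ball s r ⊆ π ⁻¹' ball (π s) r := by
      intro y hy
      have := hπ.dist_le_mul y s
      simp only [NNReal.coe_one, one_mul] at this
      exact mem_ball.2 (lt_of_le_of_lt this hy)
    exact lt_of_lt_of_le (hs r hr) (measure_mono hsub)


theorem lengthF_map_le {ν : Measure E} {π : E → E} (hπ : LipschitzWith 1 π)
    (hcpt : IsCompact (msupport ν)) (hconn : IsConnected (msupport ν))
    (hnull : ν (msupport ν)ᶜ = 0) :
    lengthF (ν.map π) ≤ lengthF ν := by
  have hπm : Measurable π := hπ.continuous.measurable
  have hmap : msupport (ν.map π) = π '' (msupport ν) := msupport_map_eq hπ hcpt hnull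
  have hconn' : IsConnected (msupport (ν.map π)) := by
    rw [hmap]; exact hconn.image π hπ.continuous.continuousOn
  have hms : MeasurableSet (π '' msupport ν) := (hcpt.image hπ.continuous).isClosed.measurableSet
  rw [lengthF, lengthF, if_pos hconn, if_pos hconn']
  apply le_sInf
  intro α hα
  apply sInf_le
  simp only [mem_setOf_eq] at hα ⊢
  rw [Measure.le_iff]
  intro s hsm
  rw [hmap, Measure.restrict_apply' hms]
  have himeq : s ∩ π '' msupport ν = π '' (π ⁻¹' s ∩ msupport ν) := by
    ext w
    constructor
    · rintro ⟨hws, u, hu, rfl⟩; exact ⟨u, ⟨hws, hu⟩, rfl⟩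
    · rintro ⟨u, ⟨hus, hu⟩, rfl⟩; exact ⟨hus, ⟨u, hu, rfl⟩⟩
  rw [himeq]
  calc μH[1] (π '' (π ⁻¹' s ∩ msupport ν))
      ≤ μH[1] (π ⁻¹' s ∩ msupport ν) := by
        have := hπ.hausdorffMeasure_image_le zero_le_one (π ⁻¹' s ∩ msupport ν)
        simpa using this
    _ = (μH[1] : Measure E).restrict (msupport ν) (π ⁻¹' s) := by
        rw [Measure.restrict_apply (hπm hsm)]
    _ ≤ (α • ν) (π ⁻¹' s) := by
        exact Measure.le_iff'.1 hα _
    _ = α * ν (π ⁻¹' s) := by simp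
    _ = α * (ν.map π) s := by rw [Measure.map_apply hπm hsm]
    _ = (α • (ν.map π)) s := by simp


end MapAux

section DiracAux
variable {E : Type*} [MetricSpace E] [MeasurableSpace E] [BorelSpace E] [SecondCountableTopology E]

theorem msupport_dirac (x : E) : msupport (Measure.dirac x) = {x} := by
  ext y
  simp only [msupport, mem_setOf_eq, mem_singleton_iff]
  constructor
  · intro h
    by_contra hne
    have hd : dist x y ≠ 0 := fun h0 => hne (dist_eq_zero.1 ((dist_comm y x).trans h0))
    have hpos : 0 < dist x y := lt_of_le_of_ne dist_nonneg (Ne.symm hd)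
    have := h (dist x y) hpos
    rw [Measure.dirac_apply' _ measurableSet_ball] at this
    have hxn : x ∉ ball y (dist x y) := by simp [mem_ball]
    rw [indicator_of_notMem hxn] at this
    exact lt_irrefl 0 this
  · rintro rfl r hr
    rw [Measure.dirac_apply' _ measurableSet_ball]
    simp [mem_ball, hr]

theorem lengthF_dirac (x : E) : lengthF (Measure.dirac x) = 0 := by
  rw [lengthF, if_pos (by rw [msupport_dirac]; exact isConnected_singleton)]
  refine le_antisymm ?_ zero_le
  apply sInf_le
  simp only [mem_setOf_eq, msupport_dirac, zero_smul]
  have : (μH[1] : Measure E).restrict {x} = 0 := by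
    rw [Measure.restrict_eq_zero]
    haveI := MeasureTheory.Measure.noAtoms_hausdorff E one_pos
    exact measure_singleton x
  rw [this]

theorem Wpp_le_coupling {p : ℝ} {μ ν : Measure E} (γ : Measure (E × E))
    (h1 : γ.map Prod.fst = μ) (h2 : γ.map Prod.snd = ν) :
    Wpp p μ ν ≤ ∫⁻ z, edist z.1 z.2 ^ p ∂γ := by
  exact iInf₂_le γ ⟨h1, h2⟩

theorem Wpp_dirac_lt_top {p : ℝ} (hp : 1 ≤ p) (ρ₀ : Measure E) [IsProbabilityMeasure ρ₀]
    (x₀ : E) (hmom : ∫⁻ x, (edist x x₀) ^ p ∂ρ₀ < ⊤) :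
    Wpp p ρ₀ (Measure.dirac x₀) < ⊤ := by
  set γ : Measure (E × E) := ρ₀.map (fun x => (x, x₀)) with hγ
  have hmeas : Measurable (fun x : E => (x, x₀)) := measurable_id.prodMk measurable_const
  have h1 : γ.map Prod.fst = ρ₀ := by
    rw [hγ, Measure.map_map measurable_fst hmeas]
    exact Measure.map_id
  have h2 : γ.map Prod.snd = Measure.dirac x₀ := by
    rw [hγ, Measure.map_map measurable_snd hmeas]
    have : (Prod.snd ∘ fun x : E => (x, x₀)) = fun _ : E => x₀ := rfl
    rw [this, Measure.map_const]
    simp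
  refine lt_of_le_of_lt (Wpp_le_coupling γ h1 h2) ?_
  rw [hγ, lintegral_map ((measurable_fst.edist measurable_snd).pow measurable_const) hmeas]
  exact hmom

end DiracAux

theorem real_gap {δ T a D : ℝ} (hδ : 0 < δ) (ha : 0 ≤ a) (hD : 0 ≤ D)
    (haD : a ^ 2 + δ ^ 2 ≤ D ^ 2) (hDT : D ≤ T) :
    a + (Real.sqrt (T ^ 2 + δ ^ 2) - T) ≤ D := by
  have hT : 0 ≤ T := le_trans hD hDT
  set u := Real.sqrt (a ^ 2 + δ ^ 2) with hu_def
  set v := Real.sqrt (T ^ 2 + δ ^ 2) with hv_def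
  have hu0 : 0 ≤ u := Real.sqrt_nonneg _
  have hv0 : 0 ≤ v := Real.sqrt_nonneg _
  have hu2 : u ^ 2 = a ^ 2 + δ ^ 2 := Real.sq_sqrt (by positivity)
  have hv2 : v ^ 2 = T ^ 2 + δ ^ 2 := Real.sq_sqrt (by positivity)
  have huD : u ≤ D := by
    rw [hu_def, show D = Real.sqrt (D ^ 2) by rw [Real.sqrt_sq hD]]
    exact Real.sqrt_le_sqrt haD
  have haT : a ≤ T := by nlinarith
  have hprod : v * a ≤ u * T := by
    have key : 0 ≤ δ ^ 2 * (T ^ 2 - a ^ 2) := mul_nonneg (sq_nonneg δ) (sub_nonneg.2 (pow_le_pow_left₀ ha haT 2))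
    have h2 : (v * a) ^ 2 ≤ (u * T) ^ 2 := by
      have e1 : (v * a) ^ 2 = (T ^ 2 + δ ^ 2) * a ^ 2 := by rw [mul_pow, hv2]
      have e2 : (u * T) ^ 2 = (a ^ 2 + δ ^ 2) * T ^ 2 := by rw [mul_pow, hu2]
      nlinarith
    have := mul_nonneg hv0 ha
    nlinarith [mul_nonneg hu0 hT]
  have hsum : v + a ≤ u + T := by
    have h2 : (v + a) ^ 2 ≤ (u + T) ^ 2 := by nlinarith
    nlinarith
  linarith


section KeyW

variable {E : Type*} [NormedAddCommGroup E] [InnerProductSpace ℝ E]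
  [MeasurableSpace E] [BorelSpace E] [SecondCountableTopology E]

theorem Wpp_map_add_const_le (p : ℝ) (hp : 1 ≤ p)
    (ρ₀ ν : Measure E) [IsProbabilityMeasure ρ₀] [IsProbabilityMeasure ν]
    {K : Set E} (hKcl : IsClosed K) (hρK : ρ₀ Kᶜ = 0)
    {π : E → E} (hπK : ∀ u, π u ∈ K) (hπl : LipschitzWith 1 π)
    (hpyth : ∀ x ∈ K, ∀ y : E, dist x (π y) ^ 2 + dist (π y) y ^ 2 ≤ dist x y ^ 2)
    {δ : ℝ} (hδ : 0 < δ) (hm : 0 < ν {y | δ ≤ Metric.infDist y K})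
    (hW : Wpp p ρ₀ ν < ⊤) :
    ∃ c : ℝ≥0∞, 0 < c ∧ Wpp p ρ₀ (ν.map π) + c ≤ Wpp p ρ₀ ν := by
  have hp0 : (0 : ℝ) < p := lt_of_lt_of_le one_pos hp
  have hπm : Measurable π := hπl.continuous.measurable
  set F : Set E := {y | δ ≤ Metric.infDist y K} with hF_def
  have hFm : MeasurableSet F :=
    (isClosed_le continuous_const (continuous_infDist_pt K)).measurableSet
  set m : ℝ≥0∞ := ν F with hm_def
  have hm1 : m ≤ 1 := prob_le_one
  have hmtop : m ≠ ⊤ := lt_of_le_of_lt hm1 ENNReal.one_lt_top |>.ne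
  set W : ℝ≥0∞ := Wpp p ρ₀ ν with hW_def
  set M : ℝ≥0∞ := W + 1 with hM_def
  have hMtop : M ≠ ⊤ := by
    rw [hM_def]; exact ENNReal.add_ne_top.2 ⟨hW.ne, ENNReal.one_ne_top⟩
  have hM0 : M ≠ 0 := by
    rw [hM_def]; exact (lt_of_lt_of_le one_pos le_add_self).ne'
  have hq0 : (2 * M / m) ≠ 0 := by
    refine (ENNReal.div_pos (by simp [hM0]) hmtop).ne'
  have hqtop : (2 * M / m) ≠ ⊤ :=
    (ENNReal.div_lt_top (by finiteness) hm.ne').ne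
  set t : ℝ≥0∞ := (2 * M / m) ^ (1 / p) with ht_def
  have htp : t ^ p = 2 * M / m := by
    rw [ht_def, ← ENNReal.rpow_mul, one_div, inv_mul_cancel₀ hp0.ne', ENNReal.rpow_one]
  have ht0 : t ≠ 0 := by
    rw [ht_def]
    simp only [ne_eq, ENNReal.rpow_eq_zero_iff, not_or]
    constructor
    · rintro ⟨h, _⟩; exact hq0 h
    · rintro ⟨h, _⟩; exact hqtop h
  have httop : t ≠ ⊤ := by
    rw [ht_def]
    simp only [ne_eq, ENNReal.rpow_eq_top_iff, not_or]
    constructor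
    · rintro ⟨h, _⟩; exact hq0 h
    · rintro ⟨h, _⟩; exact hqtop h
  set T : ℝ := t.toReal with hT_def
  have hT0 : 0 ≤ T := ENNReal.toReal_nonneg
  set g : ℝ := Real.sqrt (T ^ 2 + δ ^ 2) - T with hg_def
  have hg : 0 < g := by
    rw [hg_def, sub_pos]
    refine (Real.lt_sqrt hT0).2 ?_
    nlinarith
  set c₀ : ℝ≥0∞ := ENNReal.ofReal (g ^ p) with hc₀_def
  have hc₀ : 0 < c₀ := ENNReal.ofReal_pos.2 (Real.rpow_pos_of_pos hg p)
  have hc₀top : c₀ ≠ ⊤ := ENNReal.ofReal_ne_top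
  set c : ℝ≥0∞ := min (c₀ * (m / 2)) 1 with hc_def
  have hc : 0 < c := by
    rw [hc_def]
    refine lt_min ?_ one_pos
    exact ENNReal.mul_pos hc₀.ne' (ENNReal.div_pos hm.ne' (by norm_num)).ne'
  -- pointwise claims
  have claimA : ∀ z : E × E, z.1 ∈ K → edist z.1 (π z.2) ^ p ≤ edist z.1 z.2 ^ p := by
    intro z hz
    apply ENNReal.rpow_le_rpow _ hp0.le
    rw [edist_dist, edist_dist]
    apply ENNReal.ofReal_le_ofReal
    have h := hpyth z.1 hz z.2
    nlinarith [dist_nonneg (x := z.1) (y := π z.2), dist_nonneg (x := z.1) (y := z.2),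
      sq_nonneg (dist (π z.2) z.2)]
  have claimB : ∀ z : E × E, z.1 ∈ K → z.2 ∈ F → edist z.1 z.2 ≤ t →
      edist z.1 (π z.2) ^ p + c₀ ≤ edist z.1 z.2 ^ p := by
    intro z hz1 hz2 hzt
    set a : ℝ := dist z.1 (π z.2) with ha_def
    set D : ℝ := dist z.1 z.2 with hD_def
    have hDT : D ≤ T := by
      have h' : ENNReal.ofReal D ≤ t := by rw [hD_def, ← edist_dist]; exact hzt
      rw [hT_def]
      exact (ENNReal.ofReal_le_iff_le_toReal httop).1 h'
    have hδd : δ ≤ dist (π z.2) z.2 := by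
      refine le_trans hz2 ?_
      rw [dist_comm]
      exact Metric.infDist_le_dist_of_mem (hπK z.2)
    have haD : a ^ 2 + δ ^ 2 ≤ D ^ 2 := by
      have h := hpyth z.1 hz1 z.2
      nlinarith [dist_nonneg (x := π z.2) (y := z.2)]
    have hgap : a + g ≤ D := real_gap hδ dist_nonneg dist_nonneg haD hDT
    calc edist z.1 (π z.2) ^ p + c₀
        = ENNReal.ofReal a ^ p + ENNReal.ofReal g ^ p := by
          rw [edist_dist, hc₀_def, ← ENNReal.ofReal_rpow_of_nonneg hg.le hp0.le]
      _ ≤ (ENNReal.ofReal a + ENNReal.ofReal g) ^ p := ENNReal.add_rpow_le_rpow_add _ _ hp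
      _ = ENNReal.ofReal (a + g) ^ p := by rw [ENNReal.ofReal_add dist_nonneg hg.le]
      _ ≤ ENNReal.ofReal D ^ p :=
          ENNReal.rpow_le_rpow (ENNReal.ofReal_le_ofReal hgap) hp0.le
      _ = edist z.1 z.2 ^ p := by rw [edist_dist]
  have hfm : Measurable (fun z : E × E => edist z.1 z.2 ^ p) :=
    (measurable_fst.edist measurable_snd).pow measurable_const
  have hf₁m : Measurable (fun z : E × E => edist z.1 (π z.2) ^ p) :=
    (measurable_fst.edist (hπm.comp measurable_snd)).pow measurable_const
  have haeKf : ∀ γ : Measure (E × E), γ.map Prod.fst = ρ₀ → (∀ᵐ z ∂γ, z.1 ∈ K) := by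
    intro γ h1
    rw [ae_iff]
    have heq : {z : E × E | ¬ z.1 ∈ K} = Prod.fst ⁻¹' Kᶜ := rfl
    rw [heq, ← Measure.map_apply measurable_fst hKcl.measurableSet.compl, h1]
    exact hρK
  have hub : ∀ γ : Measure (E × E), γ.map Prod.fst = ρ₀ → γ.map Prod.snd = ν →
      Wpp p ρ₀ (ν.map π) ≤ ∫⁻ z, edist z.1 (π z.2) ^ p ∂γ ∧
      ∫⁻ z, edist z.1 (π z.2) ^ p ∂γ ≤ ∫⁻ z, edist z.1 z.2 ^ p ∂γ := by
    intro γ h1 h2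
    constructor
    · have hTm : Measurable (fun z : E × E => (z.1, π z.2)) :=
        measurable_fst.prodMk (hπm.comp measurable_snd)
      have hmar1 : (γ.map (fun z : E × E => (z.1, π z.2))).map Prod.fst = ρ₀ := by
        rw [Measure.map_map measurable_fst hTm]
        exact h1
      have hmar2 : (γ.map (fun z : E × E => (z.1, π z.2))).map Prod.snd = ν.map π := by
        rw [Measure.map_map measurable_snd hTm]
        have : (Prod.snd ∘ fun z : E × E => (z.1, π z.2)) = π ∘ Prod.snd := rfl
        rw [this, ← Measure.map_map hπm measurable_snd, h2]
      refine le_trans (iInf₂_le _ ⟨hmar1, hmar2⟩) ?_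
      rw [lintegral_map hfm hTm]
    · apply lintegral_mono_ae
      filter_upwards [haeKf γ h1] with z hz using claimA z hz
  have hWmapW : Wpp p ρ₀ (ν.map π) ≤ W := by
    rw [hW_def, Wpp]
    exact le_iInf fun γ => le_iInf fun hγ =>
      ((hub γ hγ.1 hγ.2).1).trans (hub γ hγ.1 hγ.2).2
  -- per-coupling estimate
  have main : ∀ γ : Measure (E × E), γ.map Prod.fst = ρ₀ → γ.map Prod.snd = ν →
      Wpp p ρ₀ (ν.map π) + c ≤ ∫⁻ z, edist z.1 z.2 ^ p ∂γ := by
    intro γ h1 h2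
    set f : E × E → ℝ≥0∞ := fun z => edist z.1 z.2 ^ p with hf_def
    set f₁ : E × E → ℝ≥0∞ := fun z => edist z.1 (π z.2) ^ p with hf₁_def
    have haeK : ∀ᵐ z ∂γ, z.1 ∈ K := haeKf γ h1
    have hWmap : Wpp p ρ₀ (ν.map π) ≤ ∫⁻ z, f₁ z ∂γ := (hub γ h1 h2).1
    by_cases hIM : ∫⁻ z, f z ∂γ ≤ M
    · -- Markov + gap on good set
      have hmarkov : γ {z | t ^ p ≤ f z} ≤ m / 2 := by
        have h1' := mul_meas_ge_le_lintegral₀ (μ := γ) hfm.aemeasurable (t ^ p)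
        rw [htp] at h1'
        have hMeq : 2 * M / m * (m / 2) = M := by
          rw [div_eq_mul_inv, div_eq_mul_inv]
          rw [show 2 * M * m⁻¹ * (m * 2⁻¹) = (m⁻¹ * m) * (2 * 2⁻¹) * M by ring]
          rw [ENNReal.inv_mul_cancel hm.ne' hmtop, ENNReal.mul_inv_cancel two_ne_zero
            ENNReal.ofNat_ne_top, one_mul, one_mul]
        have h2' : 2 * M / m * γ {z | 2 * M / m ≤ f z} ≤ 2 * M / m * (m / 2) :=
          le_trans h1' (le_trans hIM hMeq.symm.le)
        rw [htp]
        exact (ENNReal.mul_le_mul_iff_right hq0 hqtop).1 h2'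
      set G : Set (E × E) := (Prod.fst ⁻¹' K) ∩ (Prod.snd ⁻¹' F) ∩ {z | f z < t ^ p}
        with hG_def
      have hGm : MeasurableSet G :=
        ((measurable_fst hKcl.measurableSet).inter (measurable_snd hFm)).inter
          (hfm measurableSet_Iio)
      have hGmass : m / 2 ≤ γ G := by
        have hsub : Prod.snd ⁻¹' F ⊆ G ∪ (Prod.fst ⁻¹' Kᶜ) ∪ {z | t ^ p ≤ f z} := by
          intro z hz
          by_cases hzK : z.1 ∈ K
          · by_cases hzt : f z < t ^ p
            · exact Or.inl (Or.inl ⟨⟨hzK, hz⟩, hzt⟩)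
            · exact Or.inr (not_lt.1 hzt)
          · exact Or.inl (Or.inr hzK)
        have hKnull : γ (Prod.fst ⁻¹' Kᶜ) = 0 := by
          rw [← Measure.map_apply measurable_fst hKcl.measurableSet.compl, h1]
          exact hρK
        have hmF : m = γ (Prod.snd ⁻¹' F) := by
          rw [hm_def, ← h2, Measure.map_apply measurable_snd hFm]
        have : m ≤ γ G + (0 + m / 2) := by
          calc m = γ (Prod.snd ⁻¹' F) := hmF
            _ ≤ γ (G ∪ (Prod.fst ⁻¹' Kᶜ) ∪ {z | t ^ p ≤ f z}) := measure_mono hsub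
            _ ≤ γ (G ∪ Prod.fst ⁻¹' Kᶜ) + γ {z | t ^ p ≤ f z} := measure_union_le _ _
            _ ≤ γ G + γ (Prod.fst ⁻¹' Kᶜ) + γ {z | t ^ p ≤ f z} :=
                add_le_add_left (measure_union_le _ _) _
            _ ≤ γ G + (0 + m / 2) := by
                rw [hKnull, add_assoc]
                exact add_le_add_right (add_le_add_right hmarkov _) _
        rw [zero_add] at this
        have h' : m - m / 2 ≤ γ G := tsub_le_iff_right.2 this
        rwa [ENNReal.sub_half hmtop] at h'
      have hkey : ∫⁻ z, f₁ z ∂γ + c₀ * (m / 2) ≤ ∫⁻ z, f z ∂γ := by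
        have hind : ∫⁻ z, G.indicator (fun _ => c₀) z ∂γ = c₀ * γ G := by
          rw [lintegral_indicator hGm, setLIntegral_const]
        calc ∫⁻ z, f₁ z ∂γ + c₀ * (m / 2)
            ≤ ∫⁻ z, f₁ z ∂γ + c₀ * γ G := by
              exact add_le_add_right (mul_le_mul_right hGmass _) _
          _ = ∫⁻ z, (f₁ z + G.indicator (fun _ => c₀) z) ∂γ := by
              rw [lintegral_add_left hf₁m, hind]
          _ ≤ ∫⁻ z, f z ∂γ := by
              apply lintegral_mono_ae
              filter_upwards [haeK] with z hzK
              by_cases hzG : z ∈ G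
              · rw [indicator_of_mem hzG]
                obtain ⟨⟨hz1, hz2⟩, hz3⟩ := hzG
                refine claimB z hz1 hz2 ?_
                by_contra hlt
                exact absurd (ENNReal.rpow_le_rpow (not_le.1 hlt).le hp0.le) (not_le.2 hz3)
              · rw [indicator_of_notMem hzG, add_zero]
                exact claimA z hzK
      calc Wpp p ρ₀ (ν.map π) + c ≤ ∫⁻ z, f₁ z ∂γ + c₀ * (m / 2) :=
            add_le_add hWmap (min_le_left _ _)
        _ ≤ ∫⁻ z, f z ∂γ := hkey
    · -- the coupling is already bad
      push_neg at hIM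
      calc Wpp p ρ₀ (ν.map π) + c ≤ W + 1 := add_le_add hWmapW (min_le_right _ _)
        _ = M := hM_def.symm
        _ ≤ ∫⁻ z, f z ∂γ := hIM.le
  refine ⟨c, hc, ?_⟩
  have hfin : Wpp p ρ₀ (ν.map π) + c ≤ W := by
    rw [hW_def, Wpp]
    have : Wpp p ρ₀ (ν.map π) + c ≤ ⨅ (γ : Measure (E × E))
        (_ : γ.map Prod.fst = ρ₀ ∧ γ.map Prod.snd = ν), ∫⁻ z, edist z.1 z.2 ^ p ∂γ :=
      le_iInf fun γ => le_iInf fun hγ => main γ hγ.1 hγ.2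
    exact this
  exact hfin


end KeyW

end Auxiliary

/-- a minimizer `ν` of `E(ν) = W_p^p(ρ₀,ν) + Λ L(ν)` is supported in the
closed convex hull of `supp ρ₀`. -/
theorem stmt_15 {d : ℕ} (p : ℝ) (hp : 1 ≤ p) (Λ : ℝ) (hΛ : 0 < Λ)
    (ρ₀ ν : Measure (EuclideanSpace ℝ (Fin d)))
    [IsProbabilityMeasure ρ₀] [IsProbabilityMeasure ν]
    (hmom : ∫⁻ x, (‖x‖₊ : ℝ≥0∞) ^ p ∂ρ₀ < ⊤)
    (hmin : ∀ ν' : Measure (EuclideanSpace ℝ (Fin d)), IsProbabilityMeasure ν' →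
      energyF p Λ ρ₀ ν ≤ energyF p Λ ρ₀ ν') :
    msupport ν ⊆ closure (convexHull ℝ (msupport ρ₀)) := by
  set E := EuclideanSpace ℝ (Fin d)
  set K : Set E := closure (convexHull ℝ (msupport ρ₀)) with hK_def
  have hKcl : IsClosed K := isClosed_closure
  have hKconv : Convex ℝ K := (convex_convexHull ℝ _).closure
  have hsuppK : msupport ρ₀ ⊆ K := (subset_convexHull ℝ _).trans subset_closure
  have hρK : ρ₀ Kᶜ = 0 :=
    measure_mono_null (compl_subset_compl.2 hsuppK) (msupport_compl_null ρ₀)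
  have hKne : K.Nonempty := by
    rcases (msupport ρ₀).eq_empty_or_nonempty with h | h
    · exfalso
      have h1 := msupport_compl_null ρ₀
      rw [h, compl_empty] at h1
      exact one_ne_zero ((measure_univ (μ := ρ₀)).symm.trans h1)
    · exact (h.mono hsuppK).mono (subset_refl _) |>.mono (subset_refl _) |>.imp fun _ h => h
  -- energy finiteness
  have hmom' : ∫⁻ x : E, edist x 0 ^ p ∂ρ₀ < ⊤ := by
    have : ∀ x : E, edist x 0 = (‖x‖₊ : ℝ≥0∞) := fun x => by
      simp only [edist_zero_right, enorm_eq_nnnorm]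
    simp_rw [this]; exact hmom
  have hWd : Wpp p ρ₀ (Measure.dirac (0 : E)) < ⊤ := Wpp_dirac_lt_top hp ρ₀ 0 hmom'
  have hEfin : energyF p Λ ρ₀ ν < ⊤ := by
    refine lt_of_le_of_lt (hmin (Measure.dirac 0) inferInstance) ?_
    rw [energyF, lengthF_dirac, mul_zero, add_zero]
    exact hWd
  have hWfin : Wpp p ρ₀ ν < ⊤ := lt_of_le_of_lt (le_add_right le_rfl) (by rwa [energyF] at hEfin)
  have hΛ0 : ENNReal.ofReal Λ ≠ 0 := (ENNReal.ofReal_pos.2 hΛ).ne'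
  have hLfin : lengthF ν < ⊤ := by
    by_contra h
    push_neg at h
    have h' : lengthF ν = ⊤ := top_le_iff.1 h
    rw [energyF, h', ENNReal.mul_top hΛ0] at hEfin
    simp at hEfin
  -- connectedness and length bound
  have hconn : IsConnected (msupport ν) := by
    by_contra h
    rw [lengthF, if_neg h] at hLfin
    exact lt_irrefl _ hLfin
  obtain ⟨α, hα, hαtop⟩ : ∃ α, ((μH[1] : Measure E).restrict (msupport ν) ≤ α • ν) ∧ α < ⊤ := by
    rw [lengthF, if_pos hconn] at hLfin
    obtain ⟨α, hα, hαlt⟩ := sInf_lt_iff.1 hLfin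
    exact ⟨α, hα, hαlt⟩
  have hScl : IsClosed (msupport ν) := isClosed_msupport ν
  have hSms : MeasurableSet (msupport ν) := hScl.measurableSet
  have hHS : μH[1] (msupport ν) ≤ α := by
    have h1 := Measure.le_iff'.1 hα (msupport ν)
    rw [Measure.restrict_apply' hSms, inter_self] at h1
    refine le_trans h1 ?_
    simp only [Measure.smul_apply, smul_eq_mul]
    exact le_trans (mul_le_mul_right prob_le_one α) (by rw [mul_one])
  have hHfin : μH[1] (msupport ν) ≠ ⊤ := (lt_of_le_of_lt hHS hαtop).ne
  have hcpt : IsCompact (msupport ν) :=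
    isCompact_of_isClosed_isBounded hScl
      (isBounded_of_hausdorff_lt_top hconn.isPreconnected hHfin)
  have hnull : ν (msupport ν)ᶜ = 0 := msupport_compl_null ν
  -- projection
  obtain ⟨π, hπ⟩ := Classical.axiomOfChoice (proj_exists hKne hKcl hKconv)
  have hπK : ∀ u, π u ∈ K := fun u => (hπ u).1
  have hobt : ∀ u, ∀ w ∈ K, ⟪u - π u, w - π u⟫ ≤ 0 := fun u => (hπ u).2
  have hπl : LipschitzWith 1 π := proj_lipschitz hπK hobt
  have hpyth : ∀ x ∈ K, ∀ y : E, dist x (π y) ^ 2 + dist (π y) y ^ 2 ≤ dist x y ^ 2 :=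
    fun x hx y => proj_pythag hπK hobt hx y
  have hπm : Measurable π := hπl.continuous.measurable
  -- the bad point
  by_contra hsub
  rw [not_subset] at hsub
  obtain ⟨x, hxS, hxK⟩ := hsub
  have hdpos : 0 < Metric.infDist x K := (hKcl.notMem_iff_infDist_pos hKne).1 hxK
  set δ : ℝ := Metric.infDist x K / 2 with hδ_def
  have hδ : 0 < δ := by positivity
  have hm : 0 < ν {y : E | δ ≤ Metric.infDist y K} := by
    refine lt_of_lt_of_le (hxS δ hδ) (measure_mono ?_)
    intro y hy
    have h1 : Metric.infDist x K ≤ Metric.infDist y K + dist x y :=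
      Metric.infDist_le_infDist_add_dist
    have h2 : dist x y < δ := by rw [mem_ball, dist_comm] at hy; exact hy
    show δ ≤ Metric.infDist y K
    rw [hδ_def] at *
    linarith
  obtain ⟨c, hc, hWc⟩ :=
    Wpp_map_add_const_le p hp ρ₀ ν hKcl hρK hπK hπl hpyth hδ hm hWfin
  -- the competitor
  haveI : IsProbabilityMeasure (ν.map π) := Measure.isProbabilityMeasure_map hπm.aemeasurable
  have hL' : lengthF (ν.map π) ≤ lengthF ν := lengthF_map_le hπl hcpt hconn hnull
  have hmin' := hmin (ν.map π) inferInstance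
  have hstep : energyF p Λ ρ₀ (ν.map π) + c ≤ energyF p Λ ρ₀ ν := by
    rw [energyF, energyF]
    calc Wpp p ρ₀ (ν.map π) + ENNReal.ofReal Λ * lengthF (ν.map π) + c
        = (Wpp p ρ₀ (ν.map π) + c) + ENNReal.ofReal Λ * lengthF (ν.map π) := by ring
      _ ≤ Wpp p ρ₀ ν + ENNReal.ofReal Λ * lengthF ν :=
          add_le_add hWc (mul_le_mul_right hL' _)
  have hfinal : energyF p Λ ρ₀ ν + c ≤ energyF p Λ ρ₀ ν + 0 := by
    rw [add_zero]
    exact le_trans (add_le_add_left hmin' c) hstep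
  have := (ENNReal.add_le_add_iff_left hEfin.ne).1 hfinal
  exact absurd (nonpos_iff_eq_zero.1 this) hc.ne'

end
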